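/- In J(2,3), the strong resolving graph consists of exactly three disjoint edges {u_2,u_5}, {u_4,u_1}, {u_6,u_3} together with the isolated vertex c; hence the strong metric dimension of J(2,3) equals 3. -/

import Mathlib

/-- The generalized Jahangir graph `J(n,m)`: vertices are `none` (the central
vertex `c`) and `some a` for `a : ZMod (n*m)` (the cycle vertex `u_{a+1}`).
Cycle vertices are adjacent when consecutive, and `c` is adjacent to
`u_{nk+1}`, i.e. to `some (n*k)`, for `k = 0, …, m-1`. -/
def jahangir (n m : ℕ) : SimpleGraph (Option (ZMod (n * m))) where
  Adj x y :=
    (x = none ∧ ∃ a : ZMod (n * m), y = some a ∧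
        ∃ k : ℕ, k < m ∧ a = ((n * k : ℕ) : ZMod (n * m))) ∨
    (y = none ∧ ∃ a : ZMod (n * m), x = some a ∧
        ∃ k : ℕ, k < m ∧ a = ((n * k : ℕ) : ZMod (n * m))) ∨
    (∃ a b : ZMod (n * m), x = some a ∧ y = some b ∧ a ≠ b ∧ (b = a + 1 ∨ a = b + 1))
  symm := by
    constructor
    rintro x y (⟨hx, a, hy, hk⟩ | ⟨hy, a, hx, hk⟩ | ⟨a, b, hx, hy, hab, h⟩)
    · exact Or.inr (Or.inl ⟨hx, a, hy, hk⟩)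
    · exact Or.inl ⟨hy, a, hx, hk⟩
    · exact Or.inr (Or.inr ⟨b, a, hy, hx, hab.symm, h.symm⟩)
  loopless := by
    constructor
    rintro x (⟨hx, a, hy, _⟩ | ⟨hy, a, hx, _⟩ | ⟨a, b, hx, hy, hab, _⟩)
    · rw [hx] at hy; cases hy
    · rw [hy] at hx; cases hx
    · rw [hx] at hy; exact hab (Option.some.inj hy)

/-- `u` and `v` are mutually maximally distant in `G`. -/
def MMD {V : Type*} (G : SimpleGraph V) (u v : V) : Prop :=
  (∀ w, G.Adj u w → G.dist w v ≤ G.dist u v) ∧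
  (∀ w, G.Adj v w → G.dist u w ≤ G.dist u v)

/-- The strong resolving graph of `G`: distinct vertices are adjacent iff MMD. -/
def strongResolvingGraph {V : Type*} (G : SimpleGraph V) : SimpleGraph V where
  Adj u v := u ≠ v ∧ MMD G u v
  symm := by
    constructor
    rintro u v ⟨hne, h1, h2⟩
    refine ⟨hne.symm, ?_, ?_⟩
    · intro w hw
      rw [SimpleGraph.dist_comm, SimpleGraph.dist_comm (u := v)]
      exact h2 w hw
    · intro w hw
      rw [SimpleGraph.dist_comm, SimpleGraph.dist_comm (u := v)]
      exact h1 w hw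
  loopless := by constructor; intro u h; exact h.1 rfl

/-- The vertex covering number `α(G)`. -/
noncomputable def vertexCoverNumber {V : Type*} (G : SimpleGraph V) : ℕ :=
  sInf {k | ∃ S : Finset V, S.card = k ∧ ∀ u v, G.Adj u v → u ∈ S ∨ v ∈ S}

/-- The independence number `β(G)`. -/
noncomputable def indepNumber {V : Type*} (G : SimpleGraph V) : ℕ :=
  sSup {k | ∃ S : Finset V, S.card = k ∧ ∀ u ∈ S, ∀ v ∈ S, ¬ G.Adj u v}

/-- `W` is a strong resolving set of `G`. -/
def IsStrongResolvingSet {V : Type*} (G : SimpleGraph V) (W : Set V) : Prop :=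
  ∀ u v : V, u ≠ v → ∃ w ∈ W,
    G.dist u w = G.dist u v + G.dist v w ∨ G.dist v w = G.dist v u + G.dist u w

/-- The strong metric dimension of `G`. -/
noncomputable def sdim {V : Type*} (G : SimpleGraph V) : ℕ :=
  sInf {k | ∃ W : Finset V, W.card = k ∧ IsStrongResolvingSet G ↑W}

/-- Vertex set of the internal cycle `c u_{nk+1} … u_{n(k+1)+1} c` of `J(n,m)`. -/
def internalCycle (n m k : ℕ) : Set (Option (ZMod (n * m))) :=
  insert none {x | ∃ i ≤ n, x = some ((n * k + i : ℕ) : ZMod (n * m))}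

/-- Cycle vertices of `J(n,m)` not adjacent to the central vertex `c` (the set `U₂`). -/
def inU2 (n m : ℕ) (x : Option (ZMod (n * m))) : Prop :=
  ∃ a : ZMod (n * m), x = some a ∧ ¬ ∃ k : ℕ, k < m ∧ a = ((n * k : ℕ) : ZMod (n * m))

set_option maxRecDepth 100000

instance : DecidableRel (jahangir 2 3).Adj := fun x y => by
  unfold jahangir
  infer_instance

variable {V : Type*} {G : SimpleGraph V}

def reachN (G : SimpleGraph V) : ℕ → V → V → Prop
  | 0, x, y => x = y
  | (n+1), x, y => x = y ∨ ∃ w, G.Adj x w ∧ reachN G n w y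

instance instDecReach [DecidableEq V] [Fintype V] [DecidableRel G.Adj] :
    ∀ (n : ℕ) (x y : V), Decidable (reachN G n x y)
  | 0, x, y => decidable_of_iff (x = y) (by rw [reachN])
  | (n+1), x, y =>
    haveI : ∀ w, Decidable (reachN G n w y) := fun w => instDecReach n w y
    decidable_of_iff (x = y ∨ ∃ w, G.Adj x w ∧ reachN G n w y) (by rw [reachN])

theorem reachN_iff (n : ℕ) (x y : V) :
    reachN G n x y ↔ ∃ p : G.Walk x y, p.length ≤ n := by
  induction n generalizing x with
  | zero =>
    rw [reachN]
    constructor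
    · rintro rfl; exact ⟨.nil, by simp⟩
    · rintro ⟨p, hp⟩
      cases p with
      | nil => rfl
      | cons h q => simp at hp
  | succ n ih =>
    rw [reachN]
    constructor
    · rintro (rfl | ⟨w, hw, hr⟩)
      · exact ⟨.nil, by simp⟩
      · obtain ⟨p, hp⟩ := (ih w).mp hr
        exact ⟨.cons hw p, by simpa using hp⟩
    · rintro ⟨p, hp⟩
      cases p with
      | nil => exact Or.inl rfl
      | cons h q =>
        refine Or.inr ⟨_, h, (ih _).mpr ⟨q, ?_⟩⟩
        simpa using hp

theorem dist_eq_of_reachN {k : ℕ} {x y : V} (h1 : reachN G k x y)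
    (h2 : k = 0 ∨ ¬ reachN G (k-1) x y) : G.dist x y = k := by
  obtain ⟨p, hp⟩ := (reachN_iff k x y).mp h1
  have hle : G.dist x y ≤ k := le_trans (SimpleGraph.dist_le p) hp
  rcases h2 with rfl | h2
  · omega
  · by_contra hne
    have hlt : G.dist x y ≤ k - 1 := by omega
    obtain ⟨q, hq⟩ := (SimpleGraph.Reachable.exists_walk_length_eq_dist ⟨p⟩)
    exact h2 ((reachN_iff _ x y).mpr ⟨q, by omega⟩)

def dd : Option (ZMod (2*3)) → Option (ZMod (2*3)) → ℕ
  | none, none => 0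
  | none, some a => if a.val % 2 = 0 then 1 else 2
  | some a, none => if a.val % 2 = 0 then 1 else 2
  | some a, some b => min ((a.val + 6 - b.val) % 6) ((b.val + 6 - a.val) % 6)

theorem hdist : ∀ x y : Option (ZMod (2*3)), (jahangir 2 3).dist x y = dd x y := by
  intro x y
  refine dist_eq_of_reachN ?_ ?_ <;> revert x y <;> decide

theorem stmt_3 :
    (∀ x y : Option (ZMod (2 * 3)),
      (strongResolvingGraph (jahangir 2 3)).Adj x y ↔
        (({x, y} : Set (Option (ZMod (2 * 3)))) = {some 1, some 4} ∨
         ({x, y} : Set (Option (ZMod (2 * 3)))) = {some 3, some 0} ∨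
         ({x, y} : Set (Option (ZMod (2 * 3)))) = {some 5, some 2})) ∧
    sdim (jahangir 2 3) = 3 := by
  constructor
  · intro x y
    simp only [strongResolvingGraph, MMD, hdist, Set.ext_iff, Set.mem_insert_iff,
      Set.mem_singleton_iff]
    revert x y
    decide
  · have key : ∀ W : Finset (Option (ZMod (2*3))),
        IsStrongResolvingSet (jahangir 2 3) ↑W ↔
        (∀ u v : Option (ZMod (2*3)), u ≠ v → ∃ w ∈ W,
          dd u w = dd u v + dd v w ∨ dd v w = dd v u + dd u w) := by
      intro W
      simp only [IsStrongResolvingSet, hdist, Finset.mem_coe]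
    have h3 : (3 : ℕ) ∈ {k | ∃ W : Finset (Option (ZMod (2*3))), W.card = k ∧
        IsStrongResolvingSet (jahangir 2 3) ↑W} := by
      refine ⟨{some 1, some 3, some 5}, by decide, ?_⟩
      rw [key]
      decide
    have hlow : ∀ k ∈ {k | ∃ W : Finset (Option (ZMod (2*3))), W.card = k ∧
        IsStrongResolvingSet (jahangir 2 3) ↑W}, 3 ≤ k := by
      rintro k ⟨W, rfl, hW⟩
      rw [key] at hW
      revert hW
      revert W
      decide
    exact le_antisymm (Nat.sInf_le h3) (le_csInf ⟨3, h3⟩ hlow)
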